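/- arXiv:1803.04215 — 5 statements merged into one kernel-verified Lean document; each statement's English description precedes it below -/
import Mathlib

section
/- Let |φ(t)⟩ and ⟨ψ(t)| be differentiable vector-valued (resp. functional-valued) solutions of i d/dt |φ⟩ = (A_μ + B)|φ⟩ and −i d/dt ⟨ψ| = ⟨ψ|(A_ν + B), with ⟨ψ(t)|φ(t)⟩ ≠ 0 for all t. Then the operator P(t) = |φ(t)⟩⟨ψ(t)| / ⟨ψ(t)|φ(t)⟩ satisfies P² = P and the nonlinear differential equation i Ṗ = (1−P) A_μ P − P A_ν (1−P) + B P − P B. -/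
open Matrix

section helpers
variable {n : ℕ}

private lemma mul_vmv (A : Matrix (Fin n) (Fin n) ℂ) (u v : Fin n → ℂ) :
    A * vecMulVec u v = vecMulVec (A *ᵥ u) v := by
  ext i j
  simp [mul_apply, vecMulVec_apply, mulVec, dotProduct, Finset.sum_mul, mul_assoc]

private lemma vmv_mul (u v : Fin n → ℂ) (A : Matrix (Fin n) (Fin n) ℂ) :
    vecMulVec u v * A = vecMulVec u (v ᵥ* A) := by
  ext i j
  simp [mul_apply, vecMulVec_apply, vecMul, dotProduct, Finset.mul_sum, mul_assoc]

private lemma vmv_mul_vmv (u v w x : Fin n → ℂ) :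
    vecMulVec u v * vecMulVec w x = (v ⬝ᵥ w) • vecMulVec u x := by
  ext i j
  simp [mul_apply, vecMulVec_apply, dotProduct, Finset.sum_mul, Finset.mul_sum]
  exact Finset.sum_congr rfl fun k _ => by ring

private lemma vecMul_vmv (x u v : Fin n → ℂ) :
    x ᵥ* vecMulVec u v = (x ⬝ᵥ u) • v := by
  funext j
  simp [vecMul, vecMulVec, dotProduct, Finset.sum_mul, mul_assoc]

private lemma vmv_mulVec (u v x : Fin n → ℂ) :
    vecMulVec u v *ᵥ x = (v ⬝ᵥ x) • u := by
  funext i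
  simp [mulVec, vecMulVec, dotProduct, Finset.mul_sum]
  rw [Finset.sum_mul]
  exact Finset.sum_congr rfl fun k _ => by ring

private lemma smul_vmv (a : ℂ) (u v : Fin n → ℂ) :
    vecMulVec (a • u) v = a • vecMulVec u v := by
  ext i j; simp [vecMulVec_apply, mul_assoc]

private lemma vmv_smul (a : ℂ) (u v : Fin n → ℂ) :
    vecMulVec u (a • v) = a • vecMulVec u v := by
  ext i j; simp [vecMulVec_apply]; ring

private lemma add_vmv (u u' v : Fin n → ℂ) :
    vecMulVec (u + u') v = vecMulVec u v + vecMulVec u' v := by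
  ext i j; simp [vecMulVec_apply]; ring

private lemma vmv_add (u v v' : Fin n → ℂ) :
    vecMulVec u (v + v') = vecMulVec u v + vecMulVec u v' := by
  ext i j; simp [vecMulVec_apply]; ring
end helpers

/-- If `i φ̇ = (A_μ + B) φ`, `−i ψ̇ = ψ (A_ν + B)` and `⟨ψ|φ⟩ ≠ 0`, then the
rank-one operator `P = |φ⟩⟨ψ| / ⟨ψ|φ⟩` is idempotent and satisfies
`i Ṗ = (1−P) A_μ P − P A_ν (1−P) + B P − P B`. -/
theorem projector_nonlinear_equation
    {n : ℕ}
    (Aμ Aν B : ℝ → Matrix (Fin n) (Fin n) ℂ)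
    (φ φ' : ℝ → Fin n → ℂ) (ψ ψ' : ℝ → Fin n → ℂ)
    (hφdiff : ∀ t i, HasDerivAt (fun s => φ s i) (φ' t i) t)
    (hψdiff : ∀ t i, HasDerivAt (fun s => ψ s i) (ψ' t i) t)
    (hφ : ∀ t, Complex.I • φ' t = (Aμ t + B t) *ᵥ φ t)
    (hψ : ∀ t, (-Complex.I) • ψ' t = ψ t ᵥ* (Aν t + B t))
    (hpair : ∀ t, ψ t ⬝ᵥ φ t ≠ 0)
    (P : ℝ → Matrix (Fin n) (Fin n) ℂ)
    (hP : ∀ t, P t = (ψ t ⬝ᵥ φ t)⁻¹ • Matrix.vecMulVec (φ t) (ψ t)) :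
    ∀ t, (P t * P t = P t) ∧
      ∀ i j, HasDerivAt (fun s => P s i j)
        (((-Complex.I) • ((1 - P t) * Aμ t * P t - P t * Aν t * (1 - P t)
            + B t * P t - P t * B t)) i j) t := by
  intro t
  have hc : ψ t ⬝ᵥ φ t ≠ 0 := hpair t
  have hφ' : φ' t = (-Complex.I) • ((Aμ t + B t) *ᵥ φ t) := by
    rw [← hφ t, smul_smul]
    simp
  have hψ' : ψ' t = Complex.I • (ψ t ᵥ* (Aν t + B t)) := by
    rw [← hψ t, smul_smul]
    simp
  constructor
  · rw [hP t, Matrix.smul_mul, Matrix.mul_smul, vmv_mul_vmv, smul_smul, smul_smul]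
    congr 1
    field_simp
  · -- key matrix identity
    have key : (-(ψ' t ⬝ᵥ φ t + ψ t ⬝ᵥ φ' t) / (ψ t ⬝ᵥ φ t) ^ 2) • vecMulVec (φ t) (ψ t)
        + (ψ t ⬝ᵥ φ t)⁻¹ • (vecMulVec (φ' t) (ψ t) + vecMulVec (φ t) (ψ' t))
        = (-Complex.I) • ((1 - P t) * Aμ t * P t - P t * Aν t * (1 - P t)
            + B t * P t - P t * B t) := by
      rw [hP t, hφ', hψ']
      simp only [sub_mul, mul_sub, one_mul, mul_one, Matrix.smul_mul, Matrix.mul_smul,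
        Matrix.add_mulVec, Matrix.vecMul_add, add_vmv, vmv_add, smul_vmv, vmv_smul,
        mul_vmv, vmv_mul, vecMul_vmv, vmv_mulVec, dotProduct_add, add_dotProduct,
        dotProduct_smul, smul_dotProduct, Matrix.dotProduct_mulVec,
        smul_add, smul_sub, smul_smul]
      match_scalars <;> field_simp <;> ring
    intro i j
    have hcd : HasDerivAt (fun s => ψ s ⬝ᵥ φ s) (ψ' t ⬝ᵥ φ t + ψ t ⬝ᵥ φ' t) t := by
      have h := HasDerivAt.fun_sum (fun k (_ : k ∈ Finset.univ) => (hψdiff t k).mul (hφdiff t k))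
      have e1 : (fun s => ψ s ⬝ᵥ φ s) = fun s => ∑ k, ψ s k * φ s k := rfl
      rw [e1]
      refine h.congr_deriv ?_
      simp [dotProduct, Finset.sum_add_distrib]
    have h0 : HasDerivAt (fun s => (ψ s ⬝ᵥ φ s)⁻¹)
        (-(ψ' t ⬝ᵥ φ t + ψ t ⬝ᵥ φ' t) / (ψ t ⬝ᵥ φ t) ^ 2) t := by
      have h := (hasDerivAt_inv hc).comp t hcd
      refine h.congr_deriv ?_
      field_simp
    have h1 := h0.fun_mul ((hφdiff t i).fun_mul (hψdiff t j))
    have hfun : (fun s => P s i j) = fun s => (ψ s ⬝ᵥ φ s)⁻¹ * (φ s i * ψ s j) := by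
      funext s; rw [hP s]; simp [vecMulVec_apply]
    rw [hfun, ← key]
    exact h1
end

section
/- Suppose ρ(t) and A(t) are differentiable operator families satisfying i ρ̇ = [H, A] and [A, ρ] = 0, and suppose P(t) is a differentiable family of operators satisfying [H, P] = ((μ−ν)/(μν)) P ρ P + (1/μ) ρ P − (1/ν) P ρ and i Ṗ = ((μ−ν)/(μν)) P A P + (1/μ) A P − (1/ν) P A, for nonzero complex numbers μ ≠ ν. Define T = I + ((μ−ν)/ν) P and T⁻¹-candidate via ρ[1] = T ρ T̃ with T̃ = I + ((ν−μ)/μ) P where P² = P. Then ρ[1] = (I + ((μ−ν)/ν)P) ρ (I + ((ν−μ)/μ)P) and A[1] = (I + ((μ−ν)/ν)P) A (I + ((ν−μ)/μ)P) satisfy i ρ̇[1] = [H, A[1]] and [ρ[1], A[1]] = 0. -/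
open Matrix

set_option maxHeartbeats 4000000 in
/-- Theorem 1 (dressing transformation): if `i ρ̇ = [H,A]`, `[A,ρ] = 0`, and the
idempotent family `P` satisfies the two auxiliary equations, then the dressed
`ρ[1] = (1 + ((μ−ν)/ν)P) ρ (1 + ((ν−μ)/μ)P)` and
`A[1] = (1 + ((μ−ν)/ν)P) A (1 + ((ν−μ)/μ)P)` again satisfy
`i ρ̇[1] = [H, A[1]]` and `[ρ[1], A[1]] = 0`. -/
theorem dressing_transformation
    {n : ℕ} (μ ν : ℂ) (hμ : μ ≠ 0) (hν : ν ≠ 0) (hμν : μ ≠ ν)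
    (H : Matrix (Fin n) (Fin n) ℂ)
    (ρ ρ' A P P' : ℝ → Matrix (Fin n) (Fin n) ℂ)
    (hρdiff : ∀ t i j, HasDerivAt (fun s => ρ s i j) (ρ' t i j) t)
    (hPdiff : ∀ t i j, HasDerivAt (fun s => P s i j) (P' t i j) t)
    (hρeq : ∀ t, Complex.I • ρ' t = H * A t - A t * H)
    (hcomm : ∀ t, A t * ρ t = ρ t * A t)
    (hPidem : ∀ t, P t * P t = P t)
    (hPH : ∀ t, H * P t - P t * H =
      ((μ - ν) / (μ * ν)) • (P t * ρ t * P t) + μ⁻¹ • (ρ t * P t) - ν⁻¹ • (P t * ρ t))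
    (hPdyn : ∀ t, Complex.I • P' t =
      ((μ - ν) / (μ * ν)) • (P t * A t * P t) + μ⁻¹ • (A t * P t) - ν⁻¹ • (P t * A t)) :
    ∀ t,
      (∀ i j, HasDerivAt
        (fun s => ((1 + ((μ - ν) / ν) • P s) * ρ s * (1 + ((ν - μ) / μ) • P s)) i j)
        (((-Complex.I) •
          (H * ((1 + ((μ - ν) / ν) • P t) * A t * (1 + ((ν - μ) / μ) • P t)) -
           ((1 + ((μ - ν) / ν) • P t) * A t * (1 + ((ν - μ) / μ) • P t)) * H)) i j) t) ∧
      ((1 + ((μ - ν) / ν) • P t) * ρ t * (1 + ((ν - μ) / μ) • P t)) *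
        ((1 + ((μ - ν) / ν) • P t) * A t * (1 + ((ν - μ) / μ) • P t)) =
      ((1 + ((μ - ν) / ν) • P t) * A t * (1 + ((ν - μ) / μ) • P t)) *
        ((1 + ((μ - ν) / ν) • P t) * ρ t * (1 + ((ν - μ) / μ) • P t)) := by
  intro t
  -- entrywise derivative of a product
  have entry_mul : ∀ (X Y : ℝ → Matrix (Fin n) (Fin n) ℂ)
      (X' Y' : Matrix (Fin n) (Fin n) ℂ),
      (∀ i j, HasDerivAt (fun s => X s i j) (X' i j) t) →
      (∀ i j, HasDerivAt (fun s => Y s i j) (Y' i j) t) →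
      ∀ i j, HasDerivAt (fun s => (X s * Y s) i j) ((X' * Y t + X t * Y') i j) t := by
    intro X Y X' Y' hX hY i j
    have h := HasDerivAt.fun_sum (u := Finset.univ)
      (fun k _ => (hX i k).mul (hY k j))
    simpa [Matrix.mul_apply, Matrix.add_apply, Finset.sum_add_distrib] using h
  have entry_aff : ∀ (c : ℂ), ∀ i j,
      HasDerivAt (fun s => (1 + c • P s) i j) ((c • P' t) i j) t := by
    intro c i j
    have h := ((hPdiff t i j).const_mul c).const_add ((1 : Matrix (Fin n) (Fin n) ℂ) i j)
    simpa [Matrix.add_apply, Matrix.smul_apply, smul_eq_mul] using h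
  -- invert the `I •`
  have hI : ∀ (M N : Matrix (Fin n) (Fin n) ℂ), Complex.I • M = N →
      M = (-Complex.I) • N := by
    intro M N h
    rw [← h, smul_smul]
    simp [Complex.I_mul_I]
  have hP' : P' t = (-Complex.I) • (((μ - ν) / (μ * ν)) • (P t * A t * P t)
      + μ⁻¹ • (A t * P t) - ν⁻¹ • (P t * A t)) := hI _ _ (hPdyn t)
  have hρ' : ρ' t = (-Complex.I) • (H * A t - A t * H) := hI _ _ (hρeq t)
  -- rewrite rules
  have hAR0 : A t * ρ t = ρ t * A t := hcomm t
  have hAR : ∀ x, A t * (ρ t * x) = ρ t * (A t * x) := fun x => by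
    rw [← mul_assoc, hAR0, mul_assoc]
  have hPP0 : P t * P t = P t := hPidem t
  have hPP : ∀ x, P t * (P t * x) = P t * x := fun x => by
    rw [← mul_assoc, hPP0]
  have hHP0 : H * P t = ((μ - ν) / (μ * ν)) • (P t * (ρ t * P t))
      + μ⁻¹ • (ρ t * P t) - ν⁻¹ • (P t * ρ t) + P t * H := by
    have h := hPH t
    rw [sub_eq_iff_eq_add] at h
    rw [h, mul_assoc]
  have hHP : ∀ x, H * (P t * x) = ((μ - ν) / (μ * ν)) • (P t * (ρ t * (P t * x)))
      + μ⁻¹ • (ρ t * (P t * x)) - ν⁻¹ • (P t * (ρ t * x)) + P t * (H * x) := by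
    intro x
    rw [← mul_assoc, hHP0]
    simp only [add_mul, sub_mul, smul_mul_assoc, mul_assoc]
  constructor
  · -- derivative part
    have h1 := entry_mul _ _ _ _ (entry_aff ((μ - ν) / ν)) (hρdiff t)
    have h2 := entry_mul _ _ _ _ h1 (entry_aff ((ν - μ) / μ))
    have halg :
        ((((μ - ν) / ν) • P' t) * ρ t + (1 + ((μ - ν) / ν) • P t) * ρ' t)
            * (1 + ((ν - μ) / μ) • P t)
          + ((1 + ((μ - ν) / ν) • P t) * ρ t) * (((ν - μ) / μ) • P' t)
        = (-Complex.I) •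
          (H * ((1 + ((μ - ν) / ν) • P t) * A t * (1 + ((ν - μ) / μ) • P t)) -
           ((1 + ((μ - ν) / ν) • P t) * A t * (1 + ((ν - μ) / μ) • P t)) * H) := by
      rw [hP', hρ']
      simp only [mul_add, add_mul, mul_sub, sub_mul, smul_add, smul_sub, smul_smul,
        smul_mul_assoc, mul_smul_comm, mul_one, one_mul, mul_assoc,
        hAR, hAR0, hPP, hPP0, hHP, hHP0]
      match_scalars <;> field_simp
      all_goals try ring1
      all_goals try (exact Or.inl (by ring))
      all_goals (rw [div_eq_iff (by simp [hμ, hν, mul_eq_zero])]; ring1)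
    intro i j
    rw [← halg]
    exact h2 i j
  · -- commutation part
    have hST : (1 + ((ν - μ) / μ) • P t) * (1 + ((μ - ν) / ν) • P t) = 1 := by
      simp only [mul_add, add_mul, mul_one, one_mul, smul_smul, smul_mul_assoc,
        mul_smul_comm, hPP0]
      match_scalars <;> field_simp
      all_goals try ring1
      all_goals try (exact Or.inl (by ring))
      all_goals (rw [div_eq_iff (by simp [hμ, hν, mul_eq_zero])]; ring1)
    have cancel : ∀ x, (1 + ((ν - μ) / μ) • P t) * ((1 + ((μ - ν) / ν) • P t) * x) = x :=
      fun x => by rw [← mul_assoc, hST, one_mul]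
    have h3 : ∀ M N : Matrix (Fin n) (Fin n) ℂ,
        ((1 + ((μ - ν) / ν) • P t) * M * (1 + ((ν - μ) / μ) • P t)) *
          ((1 + ((μ - ν) / ν) • P t) * N * (1 + ((ν - μ) / μ) • P t)) =
        (1 + ((μ - ν) / ν) • P t) * (M * N) * (1 + ((ν - μ) / μ) • P t) := by
      intro M N
      simp only [mul_assoc, cancel]
    rw [h3, h3, hAR0]
end

section
/- Let H = diag(h₁, h₂, h₃) and let ρ(t) be a Hermitian 3×3 solution of i ρ̇ = [H, θ₂ ρ² + θ₁ ρ] with entries ρ_jj on the diagonal and a = ρ₁₂, b = ρ₁₃, c = ρ₂₃. Then the diagonal entries ρ₁₁, ρ₂₂, ρ₃₃ are constant in time, and the quantities X = (h₁−h₃)|a|² + (h₁−h₂)|b|², Y = (h₂−h₃)|a|² − (h₁−h₂)|c|², Z = (h₁−h₃)|c|² + (h₂−h₃)|b|², and Q = |a|² + |b|² + |c|² are constants of motion. -/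
open Matrix

private lemma key_combos (h0 h1 h2 t1 t2 p q r : ℝ) (a b c a' b' c' : ℂ)
    (ha : Complex.I * a' = ((h0 : ℂ) - h1) *
      ((t2 : ℂ) * ((p : ℂ) * a + a * (q : ℂ) + b * (starRingEnd ℂ c)) + (t1 : ℂ) * a))
    (hb : Complex.I * b' = ((h0 : ℂ) - h2) *
      ((t2 : ℂ) * ((p : ℂ) * b + a * c + b * (r : ℂ)) + (t1 : ℂ) * b))
    (hc : Complex.I * c' = ((h1 : ℂ) - h2) *
      ((t2 : ℂ) * ((starRingEnd ℂ a) * b + (q : ℂ) * c + c * (r : ℂ)) + (t1 : ℂ) * c)) :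
    ((h0-h2) * (2*(a.re*a'.re+a.im*a'.im)) + (h0-h1) * (2*(b.re*b'.re+b.im*b'.im)) = 0) ∧
    ((h1-h2) * (2*(a.re*a'.re+a.im*a'.im)) - (h0-h1) * (2*(c.re*c'.re+c.im*c'.im)) = 0) ∧
    ((h0-h2) * (2*(c.re*c'.re+c.im*c'.im)) + (h1-h2) * (2*(b.re*b'.re+b.im*b'.im)) = 0) ∧
    ((2*(a.re*a'.re+a.im*a'.im)) + (2*(b.re*b'.re+b.im*b'.im)) + (2*(c.re*c'.re+c.im*c'.im)) = 0) := by
  have ea : a' = -Complex.I * (((h0 : ℂ) - h1) *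
      ((t2 : ℂ) * ((p : ℂ) * a + a * (q : ℂ) + b * (starRingEnd ℂ c)) + (t1 : ℂ) * a)) := by
    linear_combination (-Complex.I) * ha + a' * Complex.I_sq
  have eb : b' = -Complex.I * (((h0 : ℂ) - h2) *
      ((t2 : ℂ) * ((p : ℂ) * b + a * c + b * (r : ℂ)) + (t1 : ℂ) * b)) := by
    linear_combination (-Complex.I) * hb + b' * Complex.I_sq
  have ec : c' = -Complex.I * (((h1 : ℂ) - h2) *
      ((t2 : ℂ) * ((starRingEnd ℂ a) * b + (q : ℂ) * c + c * (r : ℂ)) + (t1 : ℂ) * c)) := by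
    linear_combination (-Complex.I) * hc + c' * Complex.I_sq
  subst ea eb ec
  refine ⟨?_, ?_, ?_, ?_⟩ <;>
  · simp only [Complex.mul_re, Complex.mul_im, Complex.add_re, Complex.add_im,
      Complex.sub_re, Complex.sub_im, Complex.neg_re, Complex.neg_im,
      Complex.I_re, Complex.I_im, Complex.ofReal_re, Complex.ofReal_im,
      Complex.conj_re, Complex.conj_im]
    ring

private lemma hasDerivAt_normSq {f : ℝ → ℂ} {f' : ℂ} {t : ℝ} (hf : HasDerivAt f f' t) :
    HasDerivAt (fun s => Complex.normSq (f s))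
      (2 * ((f t).re * f'.re + (f t).im * f'.im)) t := by
  have hre : HasDerivAt (fun s => (f s).re) f'.re t :=
    (Complex.reCLM.hasFDerivAt.comp_hasDerivAt t hf)
  have him : HasDerivAt (fun s => (f s).im) f'.im t :=
    (Complex.imCLM.hasFDerivAt.comp_hasDerivAt t hf)
  have := (hre.mul hre).add (him.mul him)
  simp only [Complex.normSq_apply]
  exact this.congr_deriv (by ring)

/-- For the 3×3 system `i ρ̇ = [H, θ₂ρ² + θ₁ρ]` with diagonal `H`, the diagonal
entries of `ρ` and the quantities `X, Y, Z, Q` built from the squared moduli of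
the off-diagonal entries are constants of motion. -/
theorem three_dim_constants_of_motion
    (h : Fin 3 → ℝ)
    (θ₁ θ₂ : ℝ → ℝ)
    (ρ ρ' : ℝ → Matrix (Fin 3) (Fin 3) ℂ)
    (hρherm : ∀ t, (ρ t).IsHermitian)
    (hρdiff : ∀ t i j, HasDerivAt (fun s => ρ s i j) (ρ' t i j) t)
    (hρeq : ∀ t, Complex.I • ρ' t =
      Matrix.diagonal (fun i => (h i : ℂ)) *
        (((θ₂ t : ℝ) : ℂ) • (ρ t * ρ t) + ((θ₁ t : ℝ) : ℂ) • ρ t) -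
      (((θ₂ t : ℝ) : ℂ) • (ρ t * ρ t) + ((θ₁ t : ℝ) : ℂ) • ρ t) *
        Matrix.diagonal (fun i => (h i : ℂ))) :
    (∀ t i, ρ t i i = ρ 0 i i) ∧
    (∀ t, (h 0 - h 2) * Complex.normSq (ρ t 0 1) + (h 0 - h 1) * Complex.normSq (ρ t 0 2) =
          (h 0 - h 2) * Complex.normSq (ρ 0 0 1) + (h 0 - h 1) * Complex.normSq (ρ 0 0 2)) ∧
    (∀ t, (h 1 - h 2) * Complex.normSq (ρ t 0 1) - (h 0 - h 1) * Complex.normSq (ρ t 1 2) =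
          (h 1 - h 2) * Complex.normSq (ρ 0 0 1) - (h 0 - h 1) * Complex.normSq (ρ 0 1 2)) ∧
    (∀ t, (h 0 - h 2) * Complex.normSq (ρ t 1 2) + (h 1 - h 2) * Complex.normSq (ρ t 0 2) =
          (h 0 - h 2) * Complex.normSq (ρ 0 1 2) + (h 1 - h 2) * Complex.normSq (ρ 0 0 2)) ∧
    (∀ t, Complex.normSq (ρ t 0 1) + Complex.normSq (ρ t 0 2) + Complex.normSq (ρ t 1 2) =
          Complex.normSq (ρ 0 0 1) + Complex.normSq (ρ 0 0 2) + Complex.normSq (ρ 0 1 2)) := by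
  -- entrywise form of the evolution equation
  have he : ∀ t (i j : Fin 3), Complex.I * ρ' t i j =
      (if i = 0 then (h i : ℂ) else 0) *
        ((θ₂ t : ℂ) * (ρ t 0 0 * ρ t 0 j + ρ t 0 1 * ρ t 1 j + ρ t 0 2 * ρ t 2 j) + (θ₁ t : ℂ) * ρ t 0 j) +
      (if i = 1 then (h i : ℂ) else 0) *
        ((θ₂ t : ℂ) * (ρ t 1 0 * ρ t 0 j + ρ t 1 1 * ρ t 1 j + ρ t 1 2 * ρ t 2 j) + (θ₁ t : ℂ) * ρ t 1 j) +
      (if i = 2 then (h i : ℂ) else 0) *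
        ((θ₂ t : ℂ) * (ρ t 2 0 * ρ t 0 j + ρ t 2 1 * ρ t 1 j + ρ t 2 2 * ρ t 2 j) + (θ₁ t : ℂ) * ρ t 2 j) -
      (((θ₂ t : ℂ) * (ρ t i 0 * ρ t 0 0 + ρ t i 1 * ρ t 1 0 + ρ t i 2 * ρ t 2 0) + (θ₁ t : ℂ) * ρ t i 0) *
        (if 0 = j then (h 0 : ℂ) else 0) +
       ((θ₂ t : ℂ) * (ρ t i 0 * ρ t 0 1 + ρ t i 1 * ρ t 1 1 + ρ t i 2 * ρ t 2 1) + (θ₁ t : ℂ) * ρ t i 1) *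
        (if 1 = j then (h 1 : ℂ) else 0) +
       ((θ₂ t : ℂ) * (ρ t i 0 * ρ t 0 2 + ρ t i 1 * ρ t 1 2 + ρ t i 2 * ρ t 2 2) + (θ₁ t : ℂ) * ρ t i 2) *
        (if 2 = j then (h 2 : ℂ) else 0)) := by
    intro t i j
    have := congrFun (congrFun (hρeq t) i) j
    simpa only [Matrix.smul_apply, Matrix.sub_apply, Matrix.add_apply,
      Matrix.mul_apply, Fin.sum_univ_three, smul_eq_mul, Matrix.diagonal_apply] using this
  -- diagonal entries have zero derivative
  have hdiagzero : ∀ t (i : Fin 3), ρ' t i i = 0 := by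
    intro t i
    have h0 : Complex.I * ρ' t i i = 0 := by
      rw [he t i i]
      fin_cases i <;> simp <;> ring
    have := mul_eq_zero.mp h0
    simpa [Complex.I_ne_zero] using this
  have hconst_diag : ∀ t (i : Fin 3), ρ t i i = ρ 0 i i := by
    intro t i
    exact is_const_of_deriv_eq_zero (fun s => (hρdiff s i i).differentiableAt)
      (fun s => by rw [(hρdiff s i i).deriv, hdiagzero]) t 0
  -- hermitian relations
  have herm : ∀ t (i j : Fin 3), ρ t j i = starRingEnd ℂ (ρ t i j) := by
    intro t i j
    exact ((hρherm t).apply j i).symm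
  have hdiag_real : ∀ t (i : Fin 3), ρ t i i = ((ρ t i i).re : ℂ) := by
    intro t i
    exact (Complex.conj_eq_iff_re.mp ((hρherm t).apply i i)).symm
  -- the three scalar evolution equations at time t
  have main : ∀ t,
      ((h 0 - h 2) * (2*((ρ t 0 1).re*(ρ' t 0 1).re+(ρ t 0 1).im*(ρ' t 0 1).im))
        + (h 0 - h 1) * (2*((ρ t 0 2).re*(ρ' t 0 2).re+(ρ t 0 2).im*(ρ' t 0 2).im)) = 0) ∧
      ((h 1 - h 2) * (2*((ρ t 0 1).re*(ρ' t 0 1).re+(ρ t 0 1).im*(ρ' t 0 1).im))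
        - (h 0 - h 1) * (2*((ρ t 1 2).re*(ρ' t 1 2).re+(ρ t 1 2).im*(ρ' t 1 2).im)) = 0) ∧
      ((h 0 - h 2) * (2*((ρ t 1 2).re*(ρ' t 1 2).re+(ρ t 1 2).im*(ρ' t 1 2).im))
        + (h 1 - h 2) * (2*((ρ t 0 2).re*(ρ' t 0 2).re+(ρ t 0 2).im*(ρ' t 0 2).im)) = 0) ∧
      ((2*((ρ t 0 1).re*(ρ' t 0 1).re+(ρ t 0 1).im*(ρ' t 0 1).im))
        + (2*((ρ t 0 2).re*(ρ' t 0 2).re+(ρ t 0 2).im*(ρ' t 0 2).im))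
        + (2*((ρ t 1 2).re*(ρ' t 1 2).re+(ρ t 1 2).im*(ρ' t 1 2).im)) = 0) := by
    intro t
    apply key_combos (h 0) (h 1) (h 2) (θ₁ t) (θ₂ t) ((ρ t 0 0).re) ((ρ t 1 1).re) ((ρ t 2 2).re)
    · have := he t 0 1
      rw [herm t 0 1, herm t 0 2, herm t 1 2] at this
      rw [this, ← hdiag_real t 0, ← hdiag_real t 1]
      simp only [show (0:Fin 3) ≠ 1 by decide, show (0:Fin 3) ≠ 2 by decide,
        show (1:Fin 3) ≠ 0 by decide, show (1:Fin 3) ≠ 2 by decide,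
        show (2:Fin 3) ≠ 0 by decide, show (2:Fin 3) ≠ 1 by decide,
        reduceIte, ite_true]
      ring
    · have := he t 0 2
      rw [herm t 0 1, herm t 0 2, herm t 1 2] at this
      rw [this, ← hdiag_real t 0, ← hdiag_real t 2]
      simp only [show (0:Fin 3) ≠ 1 by decide, show (0:Fin 3) ≠ 2 by decide,
        show (1:Fin 3) ≠ 0 by decide, show (1:Fin 3) ≠ 2 by decide,
        show (2:Fin 3) ≠ 0 by decide, show (2:Fin 3) ≠ 1 by decide,
        reduceIte, ite_true]
      ring
    · have := he t 1 2
      rw [herm t 0 1, herm t 0 2, herm t 1 2] at this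
      rw [this, ← hdiag_real t 1, ← hdiag_real t 2]
      simp only [show (0:Fin 3) ≠ 1 by decide, show (0:Fin 3) ≠ 2 by decide,
        show (1:Fin 3) ≠ 0 by decide, show (1:Fin 3) ≠ 2 by decide,
        show (2:Fin 3) ≠ 0 by decide, show (2:Fin 3) ≠ 1 by decide,
        reduceIte, ite_true]
      ring
  -- derivatives of the squared moduli
  have hderivSq : ∀ t (i j : Fin 3),
      HasDerivAt (fun s => Complex.normSq (ρ s i j))
        (2 * ((ρ t i j).re * (ρ' t i j).re + (ρ t i j).im * (ρ' t i j).im)) t := by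
    intro t i j
    exact hasDerivAt_normSq (hρdiff t i j)
  -- each combination is constant
  have const_of : ∀ (f : ℝ → ℝ), (∀ t, HasDerivAt f 0 t) → ∀ t, f t = f 0 := by
    intro f hf t
    exact is_const_of_deriv_eq_zero (fun s => (hf s).differentiableAt)
      (fun s => (hf s).deriv) t 0
  refine ⟨hconst_diag, ?_, ?_, ?_, ?_⟩
  · refine const_of _ (fun t => ?_)
    have := ((hderivSq t 0 1).const_mul (h 0 - h 2)).add ((hderivSq t 0 2).const_mul (h 0 - h 1))
    rwa [(main t).1] at this
  · refine const_of _ (fun t => ?_)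
    have := ((hderivSq t 0 1).const_mul (h 1 - h 2)).sub ((hderivSq t 1 2).const_mul (h 0 - h 1))
    rwa [(main t).2.1] at this
  · refine const_of _ (fun t => ?_)
    have := ((hderivSq t 1 2).const_mul (h 0 - h 2)).add ((hderivSq t 0 2).const_mul (h 1 - h 2))
    rwa [(main t).2.2.1] at this
  · refine const_of _ (fun t => ?_)
    have := ((hderivSq t 0 1).add (hderivSq t 0 2)).add (hderivSq t 1 2)
    rwa [(main t).2.2.2] at this
end

section
/- Under the hypotheses of the 3×3 system above, the quantity U = [ρ₁₁(h₃−h₂) + ρ₂₂(h₁−h₃) + ρ₃₃(h₂−h₁)]|a|² + 2(h₁−h₂) Re(a b̄ c) is a constant of motion, and the invariants satisfy the linear relations X − Y = (h₁−h₂)Q, X + Z = (h₁−h₃)Q, Y + Z = (h₂−h₃)Q. -/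
open Matrix

set_option maxHeartbeats 2000000 in
set_option maxRecDepth 8000 in
/-- The quantity `U` is a constant of motion of the 3×3 system, and the
invariants satisfy `X − Y = (h₁−h₂)Q`, `X + Z = (h₁−h₃)Q`, `Y + Z = (h₂−h₃)Q`. -/
theorem three_dim_invariant_U_and_relations
    (h : Fin 3 → ℝ)
    (θ₁ θ₂ : ℝ → ℝ)
    (ρ ρ' : ℝ → Matrix (Fin 3) (Fin 3) ℂ)
    (hρherm : ∀ t, (ρ t).IsHermitian)
    (hρdiff : ∀ t i j, HasDerivAt (fun s => ρ s i j) (ρ' t i j) t)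
    (hρeq : ∀ t, Complex.I • ρ' t =
      Matrix.diagonal (fun i => (h i : ℂ)) *
        (((θ₂ t : ℝ) : ℂ) • (ρ t * ρ t) + ((θ₁ t : ℝ) : ℂ) • ρ t) -
      (((θ₂ t : ℝ) : ℂ) • (ρ t * ρ t) + ((θ₁ t : ℝ) : ℂ) • ρ t) *
        Matrix.diagonal (fun i => (h i : ℂ))) :
    let U : ℝ → ℝ := fun t =>
      ((ρ t 0 0).re * (h 2 - h 1) + (ρ t 1 1).re * (h 0 - h 2) +
        (ρ t 2 2).re * (h 1 - h 0)) * Complex.normSq (ρ t 0 1) +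
      2 * (h 0 - h 1) * (ρ t 0 1 * (starRingEnd ℂ) (ρ t 0 2) * ρ t 1 2).re
    let X : ℝ → ℝ := fun t =>
      (h 0 - h 2) * Complex.normSq (ρ t 0 1) + (h 0 - h 1) * Complex.normSq (ρ t 0 2)
    let Y : ℝ → ℝ := fun t =>
      (h 1 - h 2) * Complex.normSq (ρ t 0 1) - (h 0 - h 1) * Complex.normSq (ρ t 1 2)
    let Z : ℝ → ℝ := fun t =>
      (h 0 - h 2) * Complex.normSq (ρ t 1 2) + (h 1 - h 2) * Complex.normSq (ρ t 0 2)
    let Q : ℝ → ℝ := fun t =>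
      Complex.normSq (ρ t 0 1) + Complex.normSq (ρ t 0 2) + Complex.normSq (ρ t 1 2)
    (∀ t, U t = U 0) ∧
    (∀ t, X t - Y t = (h 0 - h 1) * Q t) ∧
    (∀ t, X t + Z t = (h 0 - h 2) * Q t) ∧
    (∀ t, Y t + Z t = (h 1 - h 2) * Q t) := by
  -- entrywise derivative formula
  have hM : ∀ t (i j : Fin 3), ρ' t i j =
      -Complex.I * ((h i - h j) *
        (((θ₂ t : ℝ) : ℂ) * (ρ t i 0 * ρ t 0 j + ρ t i 1 * ρ t 1 j + ρ t i 2 * ρ t 2 j) +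
         ((θ₁ t : ℝ) : ℂ) * ρ t i j)) := by
    intro t i j
    have H := hρeq t
    simp only [Matrix.mul_add, Matrix.add_mul, Matrix.mul_smul, Matrix.smul_mul] at H
    have Hij := congrFun (congrFun H i) j
    simp only [Matrix.smul_apply, Matrix.sub_apply, Matrix.add_apply, Matrix.diagonal_mul,
      Matrix.mul_diagonal, smul_eq_mul] at Hij
    simp only [Matrix.mul_apply, Fin.sum_univ_three] at Hij
    have h1 : ρ' t i j = -Complex.I * (Complex.I * ρ' t i j) := by
      rw [← mul_assoc]; simp
    rw [h1, Hij]; ring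
  -- hermiticity, entrywise
  have herm : ∀ t (i j : Fin 3), ρ t i j = (starRingEnd ℂ) (ρ t j i) := by
    intro t i j
    rw [starRingEnd_apply]
    exact ((hρherm t).apply i j).symm
  -- complexified invariant
  set W : ℝ → ℂ := fun s =>
    (ρ s 0 0 * ((h 2 : ℂ) - (h 1 : ℂ)) + ρ s 1 1 * ((h 0 : ℂ) - (h 2 : ℂ)) +
      ρ s 2 2 * ((h 1 : ℂ) - (h 0 : ℂ))) * (ρ s 0 1 * ρ s 1 0) +
    ((h 0 : ℂ) - (h 1 : ℂ)) *
      (ρ s 0 1 * ρ s 2 0 * ρ s 1 2 + ρ s 1 0 * ρ s 0 2 * ρ s 2 1) with hWdef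
  have hW0 : ∀ t, HasDerivAt W 0 t := by
    intro t
    have big :=
      (((((hρdiff t 0 0).mul_const ((h 2 : ℂ) - (h 1 : ℂ))).add
          ((hρdiff t 1 1).mul_const ((h 0 : ℂ) - (h 2 : ℂ)))).add
          ((hρdiff t 2 2).mul_const ((h 1 : ℂ) - (h 0 : ℂ)))).mul
          ((hρdiff t 0 1).mul (hρdiff t 1 0))).add
        (((((hρdiff t 0 1).mul (hρdiff t 2 0)).mul (hρdiff t 1 2)).add
          (((hρdiff t 1 0).mul (hρdiff t 0 2)).mul (hρdiff t 2 1))).const_mul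
          ((h 0 : ℂ) - (h 1 : ℂ)))
    convert big using 1
    case e'_4 => rfl
    case e'_8 => rfl
    simp only [Pi.mul_apply, Pi.add_apply]
    rw [hM t 0 0, hM t 1 1, hM t 2 2, hM t 0 1, hM t 1 0, hM t 0 2, hM t 2 0,
      hM t 1 2, hM t 2 1]
    rw [herm t 1 0, herm t 2 0, herm t 2 1]
    have h00 : (ρ t 0 0).im = 0 := by
      have := congrArg Complex.im (herm t 0 0)
      simp only [Complex.conj_im] at this; linarith
    have h11 : (ρ t 1 1).im = 0 := by
      have := congrArg Complex.im (herm t 1 1)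
      simp only [Complex.conj_im] at this; linarith
    have h22 : (ρ t 2 2).im = 0 := by
      have := congrArg Complex.im (herm t 2 2)
      simp only [Complex.conj_im] at this; linarith
    simp only [Complex.ext_iff, Complex.add_re, Complex.add_im, Complex.mul_re, Complex.mul_im,
      Complex.sub_re, Complex.sub_im, Complex.neg_re, Complex.neg_im, Complex.I_re,
      Complex.I_im, Complex.ofReal_re, Complex.ofReal_im, Complex.zero_re, Complex.zero_im,
      Complex.conj_re, Complex.conj_im, h00, h11, h22]
    constructor <;> ring
  intro U X Y Z Q
  refine ⟨?_, fun t => by simp only [X, Y, Q]; ring,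
    fun t => by simp only [X, Z, Q]; ring, fun t => by simp only [Y, Z, Q]; ring⟩
  -- U = Re ∘ W
  have hUW : ∀ t, U t = (W t).re := by
    intro t
    have h00 : (ρ t 0 0).im = 0 := by
      have := congrArg Complex.im (herm t 0 0)
      simp only [Complex.conj_im] at this; linarith
    have h11 : (ρ t 1 1).im = 0 := by
      have := congrArg Complex.im (herm t 1 1)
      simp only [Complex.conj_im] at this; linarith
    have h22 : (ρ t 2 2).im = 0 := by
      have := congrArg Complex.im (herm t 2 2)
      simp only [Complex.conj_im] at this; linarith
    simp only [U, hWdef]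
    rw [herm t 1 0, herm t 2 0, herm t 2 1]
    simp only [Complex.normSq_apply, Complex.add_re, Complex.mul_re, Complex.mul_im,
      Complex.sub_re, Complex.sub_im, Complex.ofReal_re, Complex.ofReal_im,
      Complex.conj_re, Complex.conj_im, Complex.add_im, h00, h11, h22]
    ring
  have hU0 : ∀ t, HasDerivAt U 0 t := by
    intro t
    have : HasDerivAt (fun s => (W s).re) (Complex.reCLM 0) t :=
      (Complex.reCLM.hasFDerivAt.comp_hasDerivAt t (hW0 t))
    simp only [map_zero] at this
    have hfun : U = fun s => (W s).re := funext hUW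
    rw [hfun]
    exact this
  intro t
  exact is_const_of_deriv_eq_zero (fun s => (hU0 s).differentiableAt)
    (fun s => (hU0 s).deriv) t 0
end

section
/- Let ρ satisfy ρ² = A₁ ρ + A₂(ρH + Hρ) + A₃ H + A₄ H² + A₅ I where A₁,…,A₅ are scalars. Then for any scalars θ₀, θ₁, θ₂, [H, θ₂ρ² + θ₁ρ + θ₀ I] = [(θ₁ + θ₂ A₁)H + θ₂ A₂ H², ρ]. Consequently, if G(t) = (θ₁(t) + θ₂(t) A₁)H + θ₂(t) A₂ H² and U(t) = exp(−i ∫₀ᵗ G dτ), then ρ(t) = U(t) ρ(0) U(t)† solves i ρ̇ = [H, θ₂ ρ² + θ₁ ρ + θ₀ I]. -/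
open Matrix NormedSpace

private lemma part1_aux {n : ℕ} (H ρ₀ : Matrix (Fin n) (Fin n) ℂ) (A₁ A₂ A₃ A₄ A₅ : ℝ)
    (hquad : ρ₀ * ρ₀ = (A₁ : ℂ) • ρ₀ + (A₂ : ℂ) • (ρ₀ * H + H * ρ₀) +
      (A₃ : ℂ) • H + (A₄ : ℂ) • (H * H) + (A₅ : ℂ) • (1 : Matrix (Fin n) (Fin n) ℂ))
    (x y z : ℝ) :
    H * (((z : ℝ) : ℂ) • (ρ₀ * ρ₀) + ((y : ℝ) : ℂ) • ρ₀ + ((x : ℝ) : ℂ) • 1) -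
        (((z : ℝ) : ℂ) • (ρ₀ * ρ₀) + ((y : ℝ) : ℂ) • ρ₀ + ((x : ℝ) : ℂ) • 1) * H =
      (((y + z * A₁ : ℝ) : ℂ) • H + ((z * A₂ : ℝ) : ℂ) • (H * H)) * ρ₀ -
        ρ₀ * (((y + z * A₁ : ℝ) : ℂ) • H + ((z * A₂ : ℝ) : ℂ) • (H * H)) := by
  rw [hquad]
  push_cast
  simp only [mul_add, add_mul, mul_smul_comm, smul_mul_assoc, smul_smul, smul_add, add_smul,
    mul_one, one_mul, mul_assoc]
  abel_nf

set_option maxHeartbeats 2000000 in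
private lemma aux_deriv {n : ℕ} (H ρ₀ : Matrix (Fin n) (Fin n) ℂ) (hH : H.IsHermitian)
    (c₁ c₂ : ℝ → ℝ) (t : ℝ) (d₁ d₂ : ℝ)
    (h₁ : HasDerivAt c₁ d₁ t) (h₂ : HasDerivAt c₂ d₂ t)
    (x y z : ℝ)
    (hpart : H * ((z : ℂ) • (ρ₀ * ρ₀) + (y : ℂ) • ρ₀ + (x : ℂ) • 1) -
        ((z : ℂ) • (ρ₀ * ρ₀) + (y : ℂ) • ρ₀ + (x : ℂ) • 1) * H =
      ((d₁ : ℂ) • H + (d₂ : ℂ) • (H * H)) * ρ₀ -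
        ρ₀ * ((d₁ : ℂ) • H + (d₂ : ℂ) • (H * H)))
    (ρ : ℝ → Matrix (Fin n) (Fin n) ℂ)
    (hρ : ∀ s, ρ s = exp ((-Complex.I) • (((c₁ s : ℝ) : ℂ) • H + ((c₂ s : ℝ) : ℂ) • (H * H)))
        * ρ₀ *
        (exp ((-Complex.I) •
          (((c₁ s : ℝ) : ℂ) • H + ((c₂ s : ℝ) : ℂ) • (H * H))))ᴴ)
    (i j : Fin n) :
    HasDerivAt (fun s => ρ s i j)
      (((-Complex.I) •
        (H * ((z : ℂ) • (ρ t * ρ t) + (y : ℂ) • ρ t + (x : ℂ) • 1) -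
         ((z : ℂ) • (ρ t * ρ t) + (y : ℂ) • ρ t + (x : ℂ) • 1) * H)) i j) t := by
  letI : SeminormedRing (Matrix (Fin n) (Fin n) ℂ) := Matrix.linftyOpSemiNormedRing
  letI : NormedRing (Matrix (Fin n) (Fin n) ℂ) := Matrix.linftyOpNormedRing
  letI : NormedAlgebra ℂ (Matrix (Fin n) (Fin n) ℂ) := Matrix.linftyOpNormedAlgebra
  have gHH : Commute H (H * H) := (Commute.refl H).mul_right (Commute.refl H)
  -- splitting the exponentials
  have hsplit : ∀ s : ℝ,
      exp ((-Complex.I) • (((c₁ s : ℝ) : ℂ) • H + ((c₂ s : ℝ) : ℂ) • (H * H)))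
        = exp (((c₁ s : ℝ) : ℂ) • ((-Complex.I) • H)) *
          exp (((c₂ s : ℝ) : ℂ) • ((-Complex.I) • (H * H))) := by
    intro s
    rw [show ((-Complex.I) • (((c₁ s : ℝ) : ℂ) • H + ((c₂ s : ℝ) : ℂ) • (H * H)))
        = ((c₁ s : ℝ) : ℂ) • ((-Complex.I) • H) + ((c₂ s : ℝ) : ℂ) • ((-Complex.I) • (H * H))
        from by module]
    exact Matrix.exp_add_of_commute _ _
      (((gHH.smul_right _).smul_right _).smul_left _ |>.smul_left _)
  have hconj : ∀ s : ℝ,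
      (exp ((-Complex.I) • (((c₁ s : ℝ) : ℂ) • H + ((c₂ s : ℝ) : ℂ) • (H * H))))ᴴ
        = exp (((c₁ s : ℝ) : ℂ) • (Complex.I • H)) *
          exp (((c₂ s : ℝ) : ℂ) • (Complex.I • (H * H))) := by
    intro s
    rw [← Matrix.exp_conjTranspose]
    rw [show ((-Complex.I) • (((c₁ s : ℝ) : ℂ) • H + ((c₂ s : ℝ) : ℂ) • (H * H)))ᴴ
        = ((c₁ s : ℝ) : ℂ) • (Complex.I • H) + ((c₂ s : ℝ) : ℂ) • (Complex.I • (H * H)) from ?_]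
    · exact Matrix.exp_add_of_commute _ _
        (((gHH.smul_right _).smul_right _).smul_left _ |>.smul_left _)
    · simp only [Matrix.conjTranspose_smul, Matrix.conjTranspose_add, Matrix.conjTranspose_mul,
        hH.eq, Complex.star_def, map_neg, _root_.map_mul, Complex.conj_I, Complex.conj_ofReal,
        neg_neg, smul_add, smul_smul]
      module
  simp only [hρ]
  simp only [hconj]
  simp only [hsplit]
  -- derivatives of the four exponential factors
  have hd₁ : HasDerivAt (fun s => ((c₁ s : ℝ) : ℂ)) ((d₁ : ℝ) : ℂ) t := h₁.ofReal_comp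
  have hd₂ : HasDerivAt (fun s => ((c₂ s : ℝ) : ℂ)) ((d₂ : ℝ) : ℂ) t := h₂.ofReal_comp
  have hE1 : HasDerivAt (fun s => exp (((c₁ s : ℝ) : ℂ) • ((-Complex.I) • H)))
      (((d₁ : ℝ) : ℂ) • (((-Complex.I) • H) *
        exp (((c₁ t : ℝ) : ℂ) • ((-Complex.I) • H)))) t :=
    by have := (hasDerivAt_exp_smul_const' (𝕂 := ℂ) ((-Complex.I) • H) (((c₁ t : ℝ) : ℂ))).scomp t hd₁; exact this
  have hE2 : HasDerivAt (fun s => exp (((c₂ s : ℝ) : ℂ) • ((-Complex.I) • (H * H))))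
      (((d₂ : ℝ) : ℂ) • (((-Complex.I) • (H * H)) *
        exp (((c₂ t : ℝ) : ℂ) • ((-Complex.I) • (H * H))))) t :=
    by have := (hasDerivAt_exp_smul_const' (𝕂 := ℂ) ((-Complex.I) • (H * H)) (((c₂ t : ℝ) : ℂ))).scomp t hd₂; exact this
  have hE3 : HasDerivAt (fun s => exp (((c₁ s : ℝ) : ℂ) • (Complex.I • H)))
      (((d₁ : ℝ) : ℂ) • ((Complex.I • H) *
        exp (((c₁ t : ℝ) : ℂ) • (Complex.I • H)))) t :=
    by have := (hasDerivAt_exp_smul_const' (𝕂 := ℂ) (Complex.I • H) (((c₁ t : ℝ) : ℂ))).scomp t hd₁; exact this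
  have hE4 : HasDerivAt (fun s => exp (((c₂ s : ℝ) : ℂ) • (Complex.I • (H * H))))
      (((d₂ : ℝ) : ℂ) • ((Complex.I • (H * H)) *
        exp (((c₂ t : ℝ) : ℂ) • (Complex.I • (H * H))))) t :=
    by have := (hasDerivAt_exp_smul_const' (𝕂 := ℂ) (Complex.I • (H * H)) (((c₂ t : ℝ) : ℂ))).scomp t hd₂; exact this
  set W1 : Matrix (Fin n) (Fin n) ℂ := exp (((c₁ t : ℝ) : ℂ) • ((-Complex.I) • H)) with hW1
  set W2 : Matrix (Fin n) (Fin n) ℂ := exp (((c₂ t : ℝ) : ℂ) • ((-Complex.I) • (H * H)))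
    with hW2
  set V1 : Matrix (Fin n) (Fin n) ℂ := exp (((c₁ t : ℝ) : ℂ) • (Complex.I • H)) with hV1
  set V2 : Matrix (Fin n) (Fin n) ℂ := exp (((c₂ t : ℝ) : ℂ) • (Complex.I • (H * H))) with hV2
  -- commutation facts
  have cHW1 : Commute H W1 := (((Commute.refl H).smul_right _).smul_right _).exp_right
  have cHW2 : Commute H W2 := ((gHH.smul_right _).smul_right _).exp_right
  have cHV1 : Commute H V1 := (((Commute.refl H).smul_right _).smul_right _).exp_right
  have cHV2 : Commute H V2 := ((gHH.smul_right _).smul_right _).exp_right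
  have gsm : ∀ (a b : ℂ) (M N : Matrix (Fin n) (Fin n) ℂ), Commute M N →
      Commute (a • M) (b • N) := fun a b M N h => (h.smul_left a).smul_right b
  have cW1W2 : Commute W1 W2 :=
    (gsm _ _ _ _ (gsm _ _ _ _ gHH)).exp
  have cW1V1 : Commute W1 V1 :=
    (gsm _ _ _ _ (gsm _ _ _ _ (Commute.refl H))).exp
  have cW1V2 : Commute W1 V2 :=
    (gsm _ _ _ _ (gsm _ _ _ _ gHH)).exp
  have cW2V1 : Commute W2 V1 :=
    (gsm _ _ _ _ (gsm _ _ _ _ gHH.symm)).exp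
  have cW2V2 : Commute W2 V2 :=
    (gsm _ _ _ _ (gsm _ _ _ _ (Commute.refl (H * H)))).exp
  have cV1V2 : Commute V1 V2 :=
    (gsm _ _ _ _ (gsm _ _ _ _ gHH)).exp
  -- inverse facts
  have iV1W1 : V1 * W1 = 1 := by
    rw [hV1, hW1, ← Matrix.exp_add_of_commute _ _
      (gsm _ _ _ _ (gsm _ _ _ _ (Commute.refl H))),
      show (((c₁ t : ℝ) : ℂ) • (Complex.I • H)) + (((c₁ t : ℝ) : ℂ) • ((-Complex.I) • H))
        = (0 : Matrix (Fin n) (Fin n) ℂ) from by module]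
    exact exp_zero
  have iW1V1 : W1 * V1 = 1 := by
    rw [hV1, hW1, ← Matrix.exp_add_of_commute _ _
      (gsm _ _ _ _ (gsm _ _ _ _ (Commute.refl H))),
      show (((c₁ t : ℝ) : ℂ) • ((-Complex.I) • H)) + (((c₁ t : ℝ) : ℂ) • (Complex.I • H))
        = (0 : Matrix (Fin n) (Fin n) ℂ) from by module]
    exact exp_zero
  have iV2W2 : V2 * W2 = 1 := by
    rw [hV2, hW2, ← Matrix.exp_add_of_commute _ _
      (gsm _ _ _ _ (gsm _ _ _ _ (Commute.refl (H * H)))),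
      show (((c₂ t : ℝ) : ℂ) • (Complex.I • (H * H))) +
          (((c₂ t : ℝ) : ℂ) • ((-Complex.I) • (H * H)))
        = (0 : Matrix (Fin n) (Fin n) ℂ) from by module]
    exact exp_zero
  have iW2V2 : W2 * V2 = 1 := by
    rw [hV2, hW2, ← Matrix.exp_add_of_commute _ _
      (gsm _ _ _ _ (gsm _ _ _ _ (Commute.refl (H * H)))),
      show (((c₂ t : ℝ) : ℂ) • ((-Complex.I) • (H * H))) +
          (((c₂ t : ℝ) : ℂ) • (Complex.I • (H * H)))
        = (0 : Matrix (Fin n) (Fin n) ℂ) from by module]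
    exact exp_zero
  -- rewriting rules
  have w1H : ∀ x, W1 * (H * x) = H * (W1 * x) := fun x => by
    rw [← mul_assoc, cHW1.symm.eq, mul_assoc]
  have w1H0 : W1 * H = H * W1 := cHW1.symm.eq
  have w2H : ∀ x, W2 * (H * x) = H * (W2 * x) := fun x => by
    rw [← mul_assoc, cHW2.symm.eq, mul_assoc]
  have w2H0 : W2 * H = H * W2 := cHW2.symm.eq
  have v1H : ∀ x, V1 * (H * x) = H * (V1 * x) := fun x => by
    rw [← mul_assoc, cHV1.symm.eq, mul_assoc]
  have v1H0 : V1 * H = H * V1 := cHV1.symm.eq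
  have v2H : ∀ x, V2 * (H * x) = H * (V2 * x) := fun x => by
    rw [← mul_assoc, cHV2.symm.eq, mul_assoc]
  have v2H0 : V2 * H = H * V2 := cHV2.symm.eq
  have kV1W1 : ∀ x, V1 * (W1 * x) = x := fun x => by rw [← mul_assoc, iV1W1, one_mul]
  have kW1V1 : ∀ x, W1 * (V1 * x) = x := fun x => by rw [← mul_assoc, iW1V1, one_mul]
  have kV2W2 : ∀ x, V2 * (W2 * x) = x := fun x => by rw [← mul_assoc, iV2W2, one_mul]
  have kW2V2 : ∀ x, W2 * (V2 * x) = x := fun x => by rw [← mul_assoc, iW2V2, one_mul]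
  have sW2W1 : ∀ x, W2 * (W1 * x) = W1 * (W2 * x) := fun x => by
    rw [← mul_assoc, cW1W2.symm.eq, mul_assoc]
  have sW2W10 : W2 * W1 = W1 * W2 := cW1W2.symm.eq
  have sW2V1 : ∀ x, W2 * (V1 * x) = V1 * (W2 * x) := fun x => by
    rw [← mul_assoc, cW2V1.eq, mul_assoc]
  have sW2V10 : W2 * V1 = V1 * W2 := cW2V1.eq
  have sV2W1 : ∀ x, V2 * (W1 * x) = W1 * (V2 * x) := fun x => by
    rw [← mul_assoc, cW1V2.symm.eq, mul_assoc]
  have sV2W10 : V2 * W1 = W1 * V2 := cW1V2.symm.eq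
  have sV2V1 : ∀ x, V2 * (V1 * x) = V1 * (V2 * x) := fun x => by
    rw [← mul_assoc, cV1V2.symm.eq, mul_assoc]
  have sV2V10 : V2 * V1 = V1 * V2 := cV1V2.symm.eq
  -- assemble derivative at matrix level
  have hU : HasDerivAt
      (fun s => exp (((c₁ s : ℝ) : ℂ) • ((-Complex.I) • H)) *
        exp (((c₂ s : ℝ) : ℂ) • ((-Complex.I) • (H * H))))
      ((-Complex.I) • ((((d₁ : ℝ) : ℂ) • H + ((d₂ : ℝ) : ℂ) • (H * H)) * (W1 * W2))) t := by
    refine (hE1.mul hE2).congr_deriv ?_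
    simp only [← hW1, ← hW2, ← hV1, ← hV2]
    simp only [mul_assoc, smul_mul_assoc, mul_smul_comm, smul_smul, mul_add, add_mul,
      smul_add, mul_sub, sub_mul, smul_sub, mul_one, one_mul,
      w1H, w1H0, w2H, w2H0, v1H, v1H0, v2H, v2H0,
      kV1W1, kW1V1, kV2W2, kW2V2, sW2W1, sW2W10, sW2V1, sW2V10, sV2W1, sV2W10, sV2V1, sV2V10]
    module
  have hV : HasDerivAt
      (fun s => exp (((c₁ s : ℝ) : ℂ) • (Complex.I • H)) *
        exp (((c₂ s : ℝ) : ℂ) • (Complex.I • (H * H))))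
      (Complex.I • ((V1 * V2) * (((d₁ : ℝ) : ℂ) • H + ((d₂ : ℝ) : ℂ) • (H * H)))) t := by
    refine (hE3.mul hE4).congr_deriv ?_
    simp only [← hW1, ← hW2, ← hV1, ← hV2]
    simp only [mul_assoc, smul_mul_assoc, mul_smul_comm, smul_smul, mul_add, add_mul,
      smul_add, mul_sub, sub_mul, smul_sub, mul_one, one_mul,
      w1H, w1H0, w2H, w2H0, v1H, v1H0, v2H, v2H0,
      kV1W1, kW1V1, kV2W2, kW2V2, sW2W1, sW2W10, sW2V1, sW2V10, sV2W1, sV2W10, sV2V1, sV2V10]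
    module
  have hfin : HasDerivAt
      (fun s => exp (((c₁ s : ℝ) : ℂ) • ((-Complex.I) • H)) *
        exp (((c₂ s : ℝ) : ℂ) • ((-Complex.I) • (H * H))) * ρ₀ *
        (exp (((c₁ s : ℝ) : ℂ) • (Complex.I • H)) *
          exp (((c₂ s : ℝ) : ℂ) • (Complex.I • (H * H)))))
      ((-Complex.I) •
        (H * ((z : ℂ) • ((W1 * W2 * ρ₀ * (V1 * V2)) * (W1 * W2 * ρ₀ * (V1 * V2))) +
              (y : ℂ) • (W1 * W2 * ρ₀ * (V1 * V2)) + (x : ℂ) • 1) -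
         ((z : ℂ) • ((W1 * W2 * ρ₀ * (V1 * V2)) * (W1 * W2 * ρ₀ * (V1 * V2))) +
              (y : ℂ) • (W1 * W2 * ρ₀ * (V1 * V2)) + (x : ℂ) • 1) * H)) t := by
    refine ((hU.mul_const ρ₀).mul hV).congr_deriv ?_
    rw [show ((-Complex.I) •
        (H * ((z : ℂ) • ((W1 * W2 * ρ₀ * (V1 * V2)) * (W1 * W2 * ρ₀ * (V1 * V2))) +
              (y : ℂ) • (W1 * W2 * ρ₀ * (V1 * V2)) + (x : ℂ) • 1) -
         ((z : ℂ) • ((W1 * W2 * ρ₀ * (V1 * V2)) * (W1 * W2 * ρ₀ * (V1 * V2))) +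
              (y : ℂ) • (W1 * W2 * ρ₀ * (V1 * V2)) + (x : ℂ) • 1) * H))
      = (-Complex.I) • ((W1 * W2) *
          (H * ((z : ℂ) • (ρ₀ * ρ₀) + (y : ℂ) • ρ₀ + (x : ℂ) • 1) -
           ((z : ℂ) • (ρ₀ * ρ₀) + (y : ℂ) • ρ₀ + (x : ℂ) • 1) * H) * (V1 * V2)) from ?_]
    · rw [hpart]
      simp only [← hW1, ← hW2, ← hV1, ← hV2]
      simp only [mul_assoc, smul_mul_assoc, mul_smul_comm, smul_smul, mul_add, add_mul,
        smul_add, mul_sub, sub_mul, smul_sub, mul_one, one_mul,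
        w1H, w1H0, w2H, w2H0, v1H, v1H0, v2H, v2H0,
        kV1W1, kW1V1, kV2W2, kW2V2, sW2W1, sW2W10, sW2V1, sW2V10, sV2W1, sV2W10, sV2V1, sV2V10]
      module
    · simp only [mul_assoc, smul_mul_assoc, mul_smul_comm, smul_smul, mul_add, add_mul,
        smul_add, mul_sub, sub_mul, smul_sub, mul_one, one_mul,
        w1H, w1H0, w2H, w2H0, v1H, v1H0, v2H, v2H0,
        kV1W1, kW1V1, kV2W2, kW2V2, sW2W1, sW2W10, sW2V1, sW2V10, sV2W1, sV2W10, sV2V1, sV2V10]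
      module
  -- project to entries
  let π : Matrix (Fin n) (Fin n) ℂ →L[ℂ] ℂ :=
    { toFun := fun M => M i j, map_add' := fun _ _ => rfl, map_smul' := fun _ _ => rfl,
      cont := (continuous_apply j).comp (continuous_apply i) }
  exact ((π.restrictScalars ℝ).hasFDerivAt.comp_hasDerivAt t hfin)

/-- If `ρ² = A₁ρ + A₂(ρH + Hρ) + A₃H + A₄H² + A₅I`, then
`[H, θ₂ρ² + θ₁ρ + θ₀I] = [(θ₁ + θ₂A₁)H + θ₂A₂H², ρ]`; consequently, with
`G(t) = (θ₁(t) + θ₂(t)A₁)H + θ₂(t)A₂H²` and `U(t) = exp(−i∫₀ᵗ G)`, the family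
`ρ(t) = U(t) ρ(0) U(t)†` solves `i ρ̇ = [H, θ₂ρ² + θ₁ρ + θ₀I]`. -/
theorem quadratic_identity_linearizes
    {n : ℕ}
    (H : Matrix (Fin n) (Fin n) ℂ) (hH : H.IsHermitian)
    (ρ₀ : Matrix (Fin n) (Fin n) ℂ)
    (A₁ A₂ A₃ A₄ A₅ : ℝ)
    (hquad : ρ₀ * ρ₀ = (A₁ : ℂ) • ρ₀ + (A₂ : ℂ) • (ρ₀ * H + H * ρ₀) +
      (A₃ : ℂ) • H + (A₄ : ℂ) • (H * H) + (A₅ : ℂ) • (1 : Matrix (Fin n) (Fin n) ℂ))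
    (θ₀ θ₁ θ₂ : ℝ → ℝ)
    (hθ₀ : Continuous θ₀) (hθ₁ : Continuous θ₁) (hθ₂ : Continuous θ₂)
    (ρ : ℝ → Matrix (Fin n) (Fin n) ℂ)
    (hρ : ∀ t, ρ t =
      NormedSpace.exp ((-Complex.I) •
        (((∫ τ in (0:ℝ)..t, (θ₁ τ + θ₂ τ * A₁) : ℝ) : ℂ) • H +
         ((∫ τ in (0:ℝ)..t, (θ₂ τ * A₂) : ℝ) : ℂ) • (H * H))) * ρ₀ *
      (NormedSpace.exp ((-Complex.I) •
        (((∫ τ in (0:ℝ)..t, (θ₁ τ + θ₂ τ * A₁) : ℝ) : ℂ) • H +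
         ((∫ τ in (0:ℝ)..t, (θ₂ τ * A₂) : ℝ) : ℂ) • (H * H))))ᴴ) :
    (∀ t,
      H * (((θ₂ t : ℝ) : ℂ) • (ρ₀ * ρ₀) + ((θ₁ t : ℝ) : ℂ) • ρ₀ +
            ((θ₀ t : ℝ) : ℂ) • 1) -
        (((θ₂ t : ℝ) : ℂ) • (ρ₀ * ρ₀) + ((θ₁ t : ℝ) : ℂ) • ρ₀ +
            ((θ₀ t : ℝ) : ℂ) • 1) * H =
      (((θ₁ t + θ₂ t * A₁ : ℝ) : ℂ) • H + ((θ₂ t * A₂ : ℝ) : ℂ) • (H * H)) * ρ₀ -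
        ρ₀ * (((θ₁ t + θ₂ t * A₁ : ℝ) : ℂ) • H + ((θ₂ t * A₂ : ℝ) : ℂ) • (H * H))) ∧
    (∀ t i j, HasDerivAt (fun s => ρ s i j)
      (((-Complex.I) •
        (H * (((θ₂ t : ℝ) : ℂ) • (ρ t * ρ t) + ((θ₁ t : ℝ) : ℂ) • ρ t +
              ((θ₀ t : ℝ) : ℂ) • 1) -
         (((θ₂ t : ℝ) : ℂ) • (ρ t * ρ t) + ((θ₁ t : ℝ) : ℂ) • ρ t +
              ((θ₀ t : ℝ) : ℂ) • 1) * H)) i j) t) := by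
  refine ⟨fun t => part1_aux H ρ₀ A₁ A₂ A₃ A₄ A₅ hquad (θ₀ t) (θ₁ t) (θ₂ t), ?_⟩
  intro t i j
  have hFTC₁ : HasDerivAt (fun s => ∫ τ in (0:ℝ)..s, (θ₁ τ + θ₂ τ * A₁))
      (θ₁ t + θ₂ t * A₁) t :=
    ((hθ₁.add (hθ₂.mul continuous_const)).integral_hasStrictDerivAt 0 t).hasDerivAt
  have hFTC₂ : HasDerivAt (fun s => ∫ τ in (0:ℝ)..s, (θ₂ τ * A₂)) (θ₂ t * A₂) t :=
    ((hθ₂.mul continuous_const).integral_hasStrictDerivAt 0 t).hasDerivAt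
  exact aux_deriv H ρ₀ hH _ _ t _ _ hFTC₁ hFTC₂ (θ₀ t) (θ₁ t) (θ₂ t)
    (part1_aux H ρ₀ A₁ A₂ A₃ A₄ A₅ hquad (θ₀ t) (θ₁ t) (θ₂ t)) ρ hρ i j
end
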